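/- If 0 ≤ I < 1, then for all integers m ≥ 0 and 0 ≤ n < l, F_I(l,m,n) < 1; that is, for a finite time restriction the probability that the attacker's branch surpasses the honest branch is strictly smaller than one, even when 1/2 ≤ I < 1. -/

import Mathlib

/-!
First-step analysis. Writing `G N m = F I N m 0`, a walk counted by `pathCount i (m + 1)` starts
either with a down-step (weight `I`), continuing as a walk from `m`, or with an up-step (weight
`1 - I`), continuing from `m + 2` with one up-step fewer; from `0` the first step must go up. Hence
`G (N + 1) (m + 1) ≤ I * G (N + 1) m + (1 - I) * G N (m + 2)` and
`G (N + 1) 0 ≤ I + (1 - I) * G N 1`. Since `G 0 m = 0` and `1 - I > 0`, induction on `N` and then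
on `m` gives `G N m < 1`: the up-branch always carries positive weight and a shorter horizon.
-/

/-- `pathCount i m` is the number of sequences `(s 1, …, s (m+2i+1))` with every entry `±1`,
exactly `i` entries equal to `+1` (hence `m+i+1` entries equal to `-1`), such that
`m + s 1 + ⋯ + s T ≥ 0` for every `T ≤ m + 2i` (the walk started at `m` first reaches `-1`
exactly at the final step). -/
noncomputable def pathCount (i m : ℕ) : ℕ :=
  Nat.card {s : Fin (m + 2 * i + 1) → ℤ //
    (∀ t, s t = 1 ∨ s t = -1) ∧
    (Finset.univ.filter fun t => s t = 1).card = i ∧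
    ∀ T : ℕ, T ≤ m + 2 * i →
      0 ≤ (m : ℤ) + ∑ t ∈ Finset.univ.filter (fun t : Fin (m + 2 * i + 1) => (t : ℕ) < T), s t}

/-- `F I l m n = ∑_{i=0}^{l-n-1} a(i,m) (1-I)^i I^(m+1+i)`, the probability that the
attacker's branch, lagging `m` blocks behind when the honest branch has already grown by `n`
blocks, surpasses the honest branch before the honest branch grows by `l` blocks. -/
noncomputable def F (I : ℝ) (l m n : ℕ) : ℝ :=
  ∑ i ∈ Finset.range (l - n), (pathCount i m : ℝ) * (1 - I) ^ i * I ^ (m + 1 + i)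

open Finset

/-- `s` is a walk from height `a` with `i` up-steps; the height after the last step is
unconstrained. -/
def IsNonnegWalk (N i : ℕ) (a : ℤ) (s : Fin N → ℤ) : Prop :=
  (∀ t, s t = 1 ∨ s t = -1) ∧
  (univ.filter fun t => s t = 1).card = i ∧
  ∀ T < N, 0 ≤ a + ∑ t ∈ univ.filter (fun t : Fin N => (t : ℕ) < T), s t

lemma sum_filter_val_lt_succ {K : ℕ} (s : Fin (K + 1) → ℤ) (T : ℕ) :
    ∑ t ∈ univ.filter (fun t : Fin (K + 1) => (t : ℕ) < T + 1), s t
      = s 0 + ∑ t ∈ univ.filter (fun t : Fin K => (t : ℕ) < T), Fin.tail s t := by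
  simp [sum_filter, Fin.sum_univ_succ, Fin.tail]

namespace IsNonnegWalk

variable {K N i : ℕ} {a : ℤ} {s : Fin (K + 1) → ℤ}

instance : Finite {s // IsNonnegWalk N i a s} :=
  Set.Finite.to_subtype <|
    (Set.Finite.pi fun _ => Set.toFinite {1, -1}).subset fun _ hs t _ => hs.1 t

lemma nonneg_start (hs : IsNonnegWalk (K + 1) i a s) : 0 ≤ a := by
  simpa using hs.2.2 0 K.succ_pos

lemma tail {j : ℕ} (hs : IsNonnegWalk (K + 1) j a s) (hj : j = (if s 0 = 1 then 1 else 0) + i) :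
    IsNonnegWalk K i (a + s 0) (Fin.tail s) := by
  obtain ⟨hsign, hcard, hnonneg⟩ := hs
  subst hj
  refine ⟨fun t => hsign t.succ, ?_, fun T hT => ?_⟩
  · rw [Fin.card_filter_univ_succ', add_right_inj] at hcard
    exact hcard
  · have := hnonneg (T + 1) (by omega)
    rw [sum_filter_val_lt_succ] at this
    linarith

end IsNonnegWalk

lemma card_isNonnegWalk_of_neg {K i : ℕ} {a : ℤ} (ha : a < 0) :
    Nat.card {s // IsNonnegWalk (K + 1) i a s} = 0 :=
  have : IsEmpty {s // IsNonnegWalk (K + 1) i a s} := ⟨fun s => ha.not_ge s.2.nonneg_start⟩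
  Nat.card_of_isEmpty

lemma card_isNonnegWalk_succ_le (K i : ℕ) (a : ℤ) :
    Nat.card {s // IsNonnegWalk (K + 1) (i + 1) a s}
      ≤ Nat.card {s // IsNonnegWalk K i (a + 1) s}
        + Nat.card {s // IsNonnegWalk K (i + 1) (a - 1) s} := by
  rw [← Nat.card_sum]
  refine Nat.card_le_card_of_injective
    (fun s => if h0 : s.1 0 = 1 then .inl ⟨Fin.tail s.1, ?up⟩ else .inr ⟨Fin.tail s.1, ?down⟩) ?inj
  case up => simpa [h0] using s.2.tail (i := i) (by simp [h0, add_comm])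
  case down =>
    have h0' : s.1 0 = -1 := (s.2.1 0).resolve_left h0
    simpa [h0', sub_eq_add_neg] using s.2.tail (i := i + 1) (by simp [h0])
  case inj =>
    intro s s' hss
    beta_reduce at hss
    obtain ⟨hhead, htail⟩ : s.1 0 = s'.1 0 ∧ Fin.tail s.1 = Fin.tail s'.1 := by
      rcases s.2.1 0 with h0 | h0 <;> rcases s'.2.1 0 with h0' | h0' <;> simp_all
    exact Subtype.ext (by rw [← Fin.cons_self_tail s.1, hhead, htail, Fin.cons_self_tail])

lemma pathCount_eq_card (i m : ℕ) :
    pathCount i m = Nat.card {s // IsNonnegWalk (m + 2 * i + 1) i m s} :=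
  Nat.card_congr <| Equiv.subtypeEquivRight fun s => by simp only [IsNonnegWalk, Nat.lt_succ_iff]

lemma pathCount_zero (m : ℕ) : pathCount 0 m = 1 := by
  rw [pathCount_eq_card, Nat.card_eq_one_iff_exists]
  refine ⟨⟨fun _ => -1, fun _ => .inr rfl, by simp, fun T hT => ?_⟩, fun s => ?_⟩
  · simp [Fin.card_filter_val_lt]
    omega
  · have no_up := s.2.2.1
    rw [card_eq_zero, filter_eq_empty_iff] at no_up
    exact Subtype.ext <| funext fun t => (s.2.1 t).resolve_left (no_up (mem_univ t))

lemma pathCount_succ_zero_le (i : ℕ) : pathCount (i + 1) 0 ≤ pathCount i 1 := by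
  have := card_isNonnegWalk_succ_le (1 + 2 * i + 1) i 0
  rw [card_isNonnegWalk_of_neg (a := 0 - 1) (by norm_num), add_zero] at this
  rw [pathCount_eq_card, pathCount_eq_card, show 0 + 2 * (i + 1) + 1 = 1 + 2 * i + 1 + 1 by omega]
  simpa using this

lemma pathCount_succ_succ_le (i m : ℕ) :
    pathCount (i + 1) (m + 1) ≤ pathCount i (m + 2) + pathCount (i + 1) m := by
  have := card_isNonnegWalk_succ_le (m + 2 + 2 * i + 1) i (m + 1)
  rw [pathCount_eq_card, pathCount_eq_card, pathCount_eq_card,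
    show m + 1 + 2 * (i + 1) + 1 = m + 2 + 2 * i + 1 + 1 by omega,
    show m + 2 * (i + 1) + 1 = m + 2 + 2 * i + 1 by omega]
  simpa [add_assoc] using this

section CatchUp

variable {I : ℝ}

lemma F_succ_zero_le (hI0 : 0 ≤ I) (hI1 : I ≤ 1) (N : ℕ) :
    F I (N + 1) 0 0 ≤ I + (1 - I) * F I N 1 0 := by
  have hJ : 0 ≤ 1 - I := by linarith
  simp only [F, Nat.sub_zero]
  rw [sum_range_succ', mul_sum, pathCount_zero, add_comm]
  refine add_le_add (by simp) (sum_le_sum fun i _ => ?_)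
  calc (pathCount (i + 1) 0 : ℝ) * (1 - I) ^ (i + 1) * I ^ (0 + 1 + (i + 1))
      ≤ pathCount i 1 * (1 - I) ^ (i + 1) * I ^ (0 + 1 + (i + 1)) := by
        gcongr
        exact_mod_cast pathCount_succ_zero_le i
    _ = (1 - I) * (pathCount i 1 * (1 - I) ^ i * I ^ (1 + 1 + i)) := by ring

lemma F_succ_succ_le (hI0 : 0 ≤ I) (hI1 : I ≤ 1) (N m : ℕ) :
    F I (N + 1) (m + 1) 0 ≤ I * F I (N + 1) m 0 + (1 - I) * F I N (m + 2) 0 := by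
  have hJ : 0 ≤ 1 - I := by linarith
  simp only [F, Nat.sub_zero]
  have hterm (i : ℕ) :
      (pathCount (i + 1) (m + 1) : ℝ) * (1 - I) ^ (i + 1) * I ^ (m + 1 + 1 + (i + 1))
        ≤ I * (pathCount (i + 1) m * (1 - I) ^ (i + 1) * I ^ (m + 1 + (i + 1)))
          + (1 - I) * (pathCount i (m + 2) * (1 - I) ^ i * I ^ (m + 2 + 1 + i)) :=
    calc (pathCount (i + 1) (m + 1) : ℝ) * (1 - I) ^ (i + 1) * I ^ (m + 1 + 1 + (i + 1))
        ≤ (pathCount (i + 1) m + pathCount i (m + 2)) * (1 - I) ^ (i + 1)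
            * I ^ (m + 1 + 1 + (i + 1)) := by
          gcongr
          exact_mod_cast (pathCount_succ_succ_le i m).trans_eq (add_comm _ _)
      _ = _ := by ring
  have hsum := sum_le_sum fun i (_ : i ∈ range N) => hterm i
  rw [sum_add_distrib, ← mul_sum, ← mul_sum] at hsum
  rw [sum_range_succ', sum_range_succ' _ N, pathCount_zero, pathCount_zero]
  linear_combination hsum

lemma F_zero_lt_one (hI0 : 0 ≤ I) (hI1 : I < 1) (N m : ℕ) : F I N m 0 < 1 := by
  induction N generalizing m with
  | zero => simp [F]
  | succ N ihN =>
    induction m with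
    | zero =>
      calc F I (N + 1) 0 0 ≤ I + (1 - I) * F I N 1 0 := F_succ_zero_le hI0 hI1.le N
        _ < I + (1 - I) * 1 := by gcongr; exact ihN 1
        _ = 1 := by ring
    | succ m ihm =>
      calc F I (N + 1) (m + 1) 0 ≤ I * F I (N + 1) m 0 + (1 - I) * F I N (m + 2) 0 :=
            F_succ_succ_le hI0 hI1.le N m
        _ < I * 1 + (1 - I) * 1 :=
            add_lt_add_of_le_of_lt (by gcongr) (by gcongr; exact ihN _)
        _ = 1 := by ring

end CatchUp

theorem F_lt_one_general (I : ℝ) (hI0 : 0 ≤ I) (hI1 : I < 1) (l m n : ℕ) :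
    F I l m n < 1 :=
  F_zero_lt_one hI0 hI1 (l - n) m

/-- If `0 ≤ I < 1`, then for all `m ≥ 0` and `0 ≤ n < l`, `F_I(l,m,n) < 1`: for a finite
time restriction the catch-up probability is strictly smaller than one, even when
`1/2 ≤ I < 1`. -/
theorem F_lt_one (I : ℝ) (hI0 : 0 ≤ I) (hI1 : I < 1) (l m n : ℕ) (hnl : n < l) :
    F I l m n < 1 :=
  F_lt_one_general I hI0 hI1 l m n
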